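/- arXiv:2507.11256 — 8 statements merged into one kernel-verified Lean document; each statement's English description precedes it below -/
import Mathlib

section
/- Let X be a finite weighted point set in R^d, k a positive integer, and C ⊆ R^d a finite set of centers with |C| ≥ k. Then the optimal k-means cost restricted to opening centers only within C satisfies OPT_k^C(X) ≤ 2·cost(X,C) + 8·OPT_k(X). -/
/-- Weighted `k`-means cost of `X` against center set `S`. -/
noncomputable def kmCost {d : ℕ} (w : EuclideanSpace ℝ (Fin d) → ℝ)
    (X S : Finset (EuclideanSpace ℝ (Fin d))) : ℝ :=
  ∑ x ∈ X, w x * (Metric.infDist x (S : Set (EuclideanSpace ℝ (Fin d)))) ^ 2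

/-- Optimal `m`-means cost of `X` over unrestricted center sets of size `m`. -/
noncomputable def kmOPT {d : ℕ} (w : EuclideanSpace ℝ (Fin d) → ℝ)
    (X : Finset (EuclideanSpace ℝ (Fin d))) (m : ℕ) : ℝ :=
  sInf {c : ℝ | ∃ S : Finset (EuclideanSpace ℝ (Fin d)), S.card = m ∧ c = kmCost w X S}

/-- Optimal `m`-means cost of `X` restricted to center sets `S ⊆ C` of size `m`. -/
noncomputable def kmOPTIn {d : ℕ} (w : EuclideanSpace ℝ (Fin d) → ℝ)
    (X C : Finset (EuclideanSpace ℝ (Fin d))) (m : ℕ) : ℝ :=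
  sInf {c : ℝ | ∃ S : Finset (EuclideanSpace ℝ (Fin d)),
    S ⊆ C ∧ S.card = m ∧ c = kmCost w X S}

lemma kmCost_nonneg {d : ℕ} (w : EuclideanSpace ℝ (Fin d) → ℝ) (hw : ∀ x, 0 ≤ w x)
    (X S : Finset (EuclideanSpace ℝ (Fin d))) : 0 ≤ kmCost w X S :=
  Finset.sum_nonneg fun x _ => mul_nonneg (hw x) (sq_nonneg _)

/-- **Projection Lemma.** For a finite candidate center set `C` with `|C| ≥ k`,
the optimal `k`-means cost restricted to centers within `C` satisfies
`OPT_k^C(X) ≤ 2·cost(X,C) + 8·OPT_k(X)`. -/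
theorem projection_lemma {d : ℕ}
    (w : EuclideanSpace ℝ (Fin d) → ℝ) (hw : ∀ x, 0 ≤ w x)
    (X C : Finset (EuclideanSpace ℝ (Fin d))) (k : ℕ)
    (hk : 1 ≤ k) (hC : k ≤ C.card) :
    kmOPTIn w X C k ≤ 2 * kmCost w X C + 8 * kmOPT w X k := by
  classical
  have hCne : (C : Set (EuclideanSpace ℝ (Fin d))).Nonempty := by
    rw [Finset.coe_nonempty, ← Finset.card_pos]; omega
  have hCc : IsCompact (C : Set (EuclideanSpace ℝ (Fin d))) :=
    C.finite_toSet.isCompact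
  -- projection to nearest point of C
  have hproj : ∀ t : EuclideanSpace ℝ (Fin d), ∃ p ∈ C,
      Metric.infDist t (C : Set (EuclideanSpace ℝ (Fin d))) = dist t p := by
    intro t
    obtain ⟨p, hp, h⟩ := hCc.exists_infDist_eq_dist hCne t
    exact ⟨p, hp, h⟩
  choose proj hprojC hprojeq using hproj
  -- key: for any T of card k
  have key : ∀ T : Finset (EuclideanSpace ℝ (Fin d)), T.card = k →
      kmOPTIn w X C k ≤ 2 * kmCost w X C + 8 * kmCost w X T := by
    intro T hT
    have hTne : (T : Set (EuclideanSpace ℝ (Fin d))).Nonempty := by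
      rw [Finset.coe_nonempty, ← Finset.card_pos]; omega
    set S' : Finset (EuclideanSpace ℝ (Fin d)) := T.image proj with hS'
    have hS'C : S' ⊆ C := by
      intro p hp
      obtain ⟨t, _, rfl⟩ := Finset.mem_image.1 hp
      exact hprojC t
    have hS'card : S'.card ≤ k := hT ▸ Finset.card_image_le
    obtain ⟨S, hS'S, hSC, hScard⟩ := Finset.exists_subsuperset_card_eq hS'C hS'card hC
    have hS'ne : (S' : Set (EuclideanSpace ℝ (Fin d))).Nonempty := by
      rw [Finset.coe_nonempty]
      exact (Finset.coe_nonempty.1 hTne).image proj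
    -- pointwise bound
    have hpt : ∀ x ∈ X, w x * (Metric.infDist x (S : Set (EuclideanSpace ℝ (Fin d)))) ^ 2 ≤
        2 * (w x * (Metric.infDist x (C : Set (EuclideanSpace ℝ (Fin d)))) ^ 2) +
        8 * (w x * (Metric.infDist x (T : Set (EuclideanSpace ℝ (Fin d)))) ^ 2) := by
      intro x _
      obtain ⟨t, htT, hxt⟩ := (T.finite_toSet.isCompact).exists_infDist_eq_dist hTne x
      obtain ⟨c, hcC, hxc⟩ := hCc.exists_infDist_eq_dist hCne x
      have hmem : proj t ∈ S := hS'S (Finset.mem_image_of_mem proj htT)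
      have h1 : Metric.infDist x (S : Set (EuclideanSpace ℝ (Fin d))) ≤ dist x (proj t) :=
        Metric.infDist_le_dist_of_mem (by exact_mod_cast hmem)
      have h2 : dist x (proj t) ≤ dist x t + dist t (proj t) := dist_triangle _ _ _
      have h3 : dist t (proj t) ≤ dist t c := by
        rw [← hprojeq t]
        exact Metric.infDist_le_dist_of_mem (by exact_mod_cast hcC)
      have h4 : dist t c ≤ dist t x + dist x c := dist_triangle _ _ _
      set a := Metric.infDist x (C : Set (EuclideanSpace ℝ (Fin d)))
      set b := Metric.infDist x (T : Set (EuclideanSpace ℝ (Fin d)))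
      have hbound : Metric.infDist x (S : Set (EuclideanSpace ℝ (Fin d))) ≤ a + 2 * b := by
        have := dist_comm t x
        nlinarith [h1, h2, h3, h4]
      have hnn : 0 ≤ Metric.infDist x (S : Set (EuclideanSpace ℝ (Fin d))) :=
        Metric.infDist_nonneg
      have hsq : (Metric.infDist x (S : Set (EuclideanSpace ℝ (Fin d)))) ^ 2 ≤ (a + 2 * b) ^ 2 :=
        pow_le_pow_left₀ hnn hbound 2
      nlinarith [hw x, sq_nonneg (a - 2 * b), mul_nonneg (hw x) (sq_nonneg (a - 2 * b)),
        mul_le_mul_of_nonneg_left hsq (hw x)]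
    have hcost : kmCost w X S ≤ 2 * kmCost w X C + 8 * kmCost w X T := by
      unfold kmCost
      calc ∑ x ∈ X, w x * (Metric.infDist x (S : Set (EuclideanSpace ℝ (Fin d)))) ^ 2
          ≤ ∑ x ∈ X, (2 * (w x * (Metric.infDist x (C : Set (EuclideanSpace ℝ (Fin d)))) ^ 2) +
              8 * (w x * (Metric.infDist x (T : Set (EuclideanSpace ℝ (Fin d)))) ^ 2)) :=
            Finset.sum_le_sum hpt
        _ = _ := by rw [Finset.sum_add_distrib, ← Finset.mul_sum, ← Finset.mul_sum]
    have hmem : kmCost w X S ∈ {c : ℝ | ∃ S : Finset (EuclideanSpace ℝ (Fin d)),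
        S ⊆ C ∧ S.card = k ∧ c = kmCost w X S} := ⟨S, hSC, hScard, rfl⟩
    have hbdd : BddBelow {c : ℝ | ∃ S : Finset (EuclideanSpace ℝ (Fin d)),
        S ⊆ C ∧ S.card = k ∧ c = kmCost w X S} := by
      refine ⟨0, ?_⟩
      rintro c ⟨S0, -, -, rfl⟩
      exact kmCost_nonneg w hw X S0
    exact le_trans (csInf_le hbdd hmem) hcost
  -- now bound kmOPT
  obtain ⟨S0, _, hS0card⟩ := Finset.exists_subset_card_eq hC
  have hne : {c : ℝ | ∃ S : Finset (EuclideanSpace ℝ (Fin d)),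
      S.card = k ∧ c = kmCost w X S}.Nonempty := ⟨kmCost w X S0, S0, hS0card, rfl⟩
  have h : (kmOPTIn w X C k - 2 * kmCost w X C) / 8 ≤ kmOPT w X k := by
    apply le_csInf hne
    rintro c ⟨T, hT, rfl⟩
    linarith [key T hT]
  linarith
end

section
/- Let U be a finite weighted point set in R^d, let x₀, x_i ∈ R^d, and let B ⊆ U be a subset such that: (i) cost(B, x_i) ≥ cost(B, x₀), and (ii) every point y ∈ U \ B satisfies dist(y, x_i) ≥ dist(x₀, x_i). Then cost(U, x₀) ≤ 4·cost(U, x_i). -/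
/-- `ptCost w Y p = ∑_{y ∈ Y} w(y)·‖y − p‖²`. -/
noncomputable def ptCost {d : ℕ} (w : EuclideanSpace ℝ (Fin d) → ℝ)
    (Y : Finset (EuclideanSpace ℝ (Fin d))) (p : EuclideanSpace ℝ (Fin d)) : ℝ :=
  ∑ y ∈ Y, w y * dist y p ^ 2

/-- If `B ⊆ U` satisfies `cost(B, x_i) ≥ cost(B, x₀)` and every `y ∈ U \ B`
satisfies `dist(y, x_i) ≥ dist(x₀, x_i)`, then `cost(U, x₀) ≤ 4·cost(U, x_i)`. -/
theorem robust_center_cost {d : ℕ}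
    (w : EuclideanSpace ℝ (Fin d) → ℝ) (hw : ∀ p, 0 ≤ w p)
    (U B : Finset (EuclideanSpace ℝ (Fin d))) (hBU : B ⊆ U)
    (x₀ xi : EuclideanSpace ℝ (Fin d))
    (h1 : ptCost w B x₀ ≤ ptCost w B xi)
    (h2 : ∀ y ∈ U, y ∉ B → dist x₀ xi ≤ dist y xi) :
    ptCost w U x₀ ≤ 4 * ptCost w U xi := by
  classical
  have hsplit : ∀ p, ptCost w U p = ptCost w (U \ B) p + ptCost w B p := by
    intro p
    simpa [ptCost] using (Finset.sum_sdiff (f := fun y => w y * dist y p ^ 2) hBU).symm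
  rw [hsplit x₀, hsplit xi, mul_add]
  have hBnn : 0 ≤ ptCost w B xi :=
    Finset.sum_nonneg fun y _ => mul_nonneg (hw y) (sq_nonneg _)
  have hBbound : ptCost w B x₀ ≤ 4 * ptCost w B xi := by linarith
  have hSbound : ptCost w (U \ B) x₀ ≤ 4 * ptCost w (U \ B) xi := by
    rw [ptCost, ptCost, Finset.mul_sum]
    apply Finset.sum_le_sum
    intro y hy
    rw [Finset.mem_sdiff] at hy
    have hd : dist x₀ xi ≤ dist y xi := h2 y hy.1 hy.2
    have htri : dist y x₀ ≤ 2 * dist y xi :=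
      (dist_triangle y xi x₀).trans (by rw [dist_comm xi x₀]; linarith)
    have : dist y x₀ ^ 2 ≤ 4 * dist y xi ^ 2 := by nlinarith [dist_nonneg (x := y) (y := x₀)]
    nlinarith [hw y]
  linarith
end

section
/- Suppose the standard LP relaxation for weighted k-means has integrality gap at most 9 for every k, and that the fractional optimum FOPT_k is convex in k in the sense that FOPT_{αk₁+βk₂} ≤ α·FOPT_{k₁} + β·FOPT_{k₂} for all α, β ≥ 0 with α + β = 1 and αk₁+βk₂ an achievable parameter. Then for any finite weighted set X, any r ∈ [0, k−1], and any η ≥ 1: if OPT_{k−r}(X) ≤ η·OPT_k(X), then OPT_k(X) ≤ 12·OPT_{k+⌊r/(36η)⌋}(X). -/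
set_option maxHeartbeats 1000000 in
/-- **Double-sided stability** (k-means version of Lemma 4.1 of [BCF24]).
Suppose `OPT : ℕ → ℝ` is the (nonnegative) optimal `m`-means cost and
`FOPT : ℝ → ℝ` is the optimal fractional LP value with (real) center budget,
such that:
* the LP has integrality gap at most `9`: `FOPT m ≤ OPT m ≤ 9·FOPT m` for every
  natural `m`;
* `FOPT` is antitone in the budget (a larger budget can only help); and
* `FOPT` is convex: `FOPT(α·k₁ + β·k₂) ≤ α·FOPT k₁ + β·FOPT k₂` whenever
  `α, β ≥ 0` and `α + β = 1`.

Then for any `r ∈ [0, k−1]` and `η ≥ 1`: if `OPT(k−r) ≤ η·OPT(k)`, then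
`OPT(k) ≤ 12·OPT(k + ⌊r/(36η)⌋)`. -/
theorem double_sided_stability
    (OPT : ℕ → ℝ) (FOPT : ℝ → ℝ)
    (hOPTnn : ∀ m, 0 ≤ OPT m)
    (hgap : ∀ m : ℕ, FOPT m ≤ OPT m ∧ OPT m ≤ 9 * FOPT m)
    (hanti : Antitone FOPT)
    (hconv : ∀ k₁ k₂ α β : ℝ, 0 ≤ α → 0 ≤ β → α + β = 1 →
      FOPT (α * k₁ + β * k₂) ≤ α * FOPT k₁ + β * FOPT k₂)
    (k r : ℕ) (η : ℝ) (hη : 1 ≤ η) (hr : r < k)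
    (h : OPT (k - r) ≤ η * OPT k) :
    OPT k ≤ 12 * OPT (k + ⌊(r : ℝ) / (36 * η)⌋₊) := by
  have hη0 : (0:ℝ) < 36 * η := by linarith
  set t : ℕ := ⌊(r : ℝ) / (36 * η)⌋₊ with ht
  set α : ℝ := 1 / (36 * η) with hα
  have hα0 : 0 ≤ α := by positivity
  have hα1 : α ≤ 1 := by
    rw [hα, div_le_one hη0]; linarith
  set β : ℝ := 1 - α with hβ
  have hβ0 : 0 ≤ β := by linarith
  have hβ1 : β ≤ 1 := by simp [hβ]; linarith
  have hsum : α + β = 1 := by ring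
  have htle : (t : ℝ) ≤ α * r := by
    have := Nat.floor_le (a := (r : ℝ) / (36 * η)) (by positivity)
    rw [ht] at *
    calc (t:ℝ) ≤ (r : ℝ) / (36 * η) := this
      _ = α * r := by rw [hα]; ring
  have hcast : ((k - r : ℕ) : ℝ) = (k : ℝ) - r := by
    rw [Nat.cast_sub hr.le]
  have hkle : α * ((k - r : ℕ) : ℝ) + β * ((k + t : ℕ) : ℝ) ≤ (k : ℝ) := by
    rw [hcast]
    push_cast
    have h1 : β * t ≤ (t:ℝ) := by
      nlinarith [Nat.cast_nonneg (α := ℝ) t]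
    nlinarith
  have h1 : FOPT (k : ℝ) ≤ FOPT (α * ((k - r : ℕ) : ℝ) + β * ((k + t : ℕ) : ℝ)) :=
    hanti hkle
  have h2 := hconv ((k - r : ℕ) : ℝ) ((k + t : ℕ) : ℝ) α β hα0 hβ0 hsum
  have hg1 := hgap (k - r)
  have hg2 := hgap (k + t)
  have hg3 := hgap k
  have hchain : OPT k ≤ 9 * (α * OPT (k - r) + β * OPT (k + t)) := by
    have hf : FOPT (k : ℝ) ≤ α * OPT (k - r) + β * OPT (k + t) := by
      have h3 : FOPT (k : ℝ) ≤ α * FOPT ((k - r : ℕ) : ℝ) + β * FOPT ((k + t : ℕ) : ℝ) :=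
        le_trans h1 h2
      nlinarith [hg1.1, hg2.1]
    nlinarith [hg3.2]
  have hm : α * OPT (k - r) ≤ α * (η * OPT k) := mul_le_mul_of_nonneg_left h hα0
  have hfin : OPT k ≤ 9 * (α * (η * OPT k) + β * OPT (k + t)) := by
    linarith
  have hαη : 9 * (α * η) = 1/4 := by
    rw [hα]; field_simp; ring
  have hb : β * OPT (k + t) ≤ OPT (k + t) := by
    nlinarith [hOPTnn (k + t)]
  have e : 9 * (α * (η * OPT k) + β * OPT (k + t))
      = (9 * (α * η)) * OPT k + 9 * (β * OPT (k + t)) := by ring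
  rw [e, hαη] at hfin
  nlinarith [hb, hfin, hOPTnn (k + t), hOPTnn k]
end

section
/- Let φ : [Δ]^d → Z^d be the randomly shifted grid hash defined by φ(x) = ⌊(x+v)/(r/√d)⌋ coordinatewise, for a fixed shift vector v ∈ [0, r/√d]^d. Then for every x ∈ [Δ]^d and radius r ≥ 0, the set of occupied hash values φ(ball(x,r)) = {z ∈ Z^d : dist(x, φ^{-1}(z)) ≤ r} induces a connected subgraph of the grid graph on Z^d in which two vertices z, z' are adjacent iff ‖z − z'‖₁ = 1 and they differ in exactly one coordinate. -/
/-
The hash cells are the half-open cubes `∏ᵢ [zᵢ w - vᵢ, (zᵢ + 1) w - vᵢ)` with `w = r/√d`, and `x` lies in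
the cell of `z₀ = φ(x)`, so `z₀` is occupied. If `z ≠ z₀` is occupied, move one coordinate `zᵢ` one step
towards `z₀ᵢ`: for any point `y` of the cell of `z`, changing only `yᵢ` to a suitable point of the segment from `yᵢ`
to `xᵢ` lands in the new cell, and brings `y` no farther from `x`. So the new vertex is again occupied,
adjacent to `z` and closer to `z₀` in `ℓ₁`; hence every occupied vertex is joined to `z₀`.
-/

open Finset

/-- The grid graph on `ℤ^d`: two integer vectors are adjacent iff their
`ℓ₁`-distance is `1`, i.e. they differ in exactly one coordinate, by `1`. -/
def gridGraph (d : ℕ) : SimpleGraph (Fin d → ℤ) where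
  Adj z z' := ∑ i, |z i - z' i| = 1
  symm := by
    constructor
    intro z z' h
    show ∑ i, |z' i - z i| = 1
    have hsum : (∑ i, |z' i - z i|) = ∑ i, |z i - z' i| :=
      Finset.sum_congr rfl fun i _ => abs_sub_comm _ _
    rw [hsum]; exact h
  loopless := by
    constructor
    intro z h
    simp at h

/-- The randomly shifted grid hash `φ(x) = ⌊(x + v)/(r/√d)⌋` (coordinatewise). -/
noncomputable def gridHash (d : ℕ) (r : ℝ) (v : Fin d → ℝ)
    (y : EuclideanSpace ℝ (Fin d)) : Fin d → ℤ :=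
  fun i => ⌊(y i + v i) / (r / Real.sqrt d)⌋


theorem SimpleGraph.induce_connected_of_exists_adj_lt {V : Type*} (G : SimpleGraph V)
    {s : Set V} {a : V} (ha : a ∈ s) (f : V → ℕ)
    (h : ∀ b ∈ s, b ≠ a → ∃ c ∈ s, G.Adj b c ∧ f c < f b) :
    (G.induce s).Connected := by
  have reach : ∀ n, ∀ b (hb : b ∈ s), f b = n → (G.induce s).Reachable ⟨a, ha⟩ ⟨b, hb⟩ := by
    intro n
    induction n using Nat.strong_induction_on with
    | _ n ih =>
      rintro b hb rfl
      by_cases hba : b = a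
      · subst hba; rfl
      obtain ⟨c, hc, hbc, hcb⟩ := h b hb hba
      exact (ih _ hcb c hc rfl).trans (SimpleGraph.Adj.reachable (G := G.induce s) hbc.symm)
  exact (connected_iff_exists_forall_reachable _).2 ⟨⟨a, ha⟩, fun ⟨b, hb⟩ => reach _ b hb rfl⟩

theorem Metric.infDist_le_infDist_of_forall_exists_dist_le {α : Type*} [PseudoMetricSpace α]
    {x : α} {s t : Set α} (hs : s.Nonempty) (h : ∀ y ∈ s, ∃ y' ∈ t, dist x y' ≤ dist x y) :
    infDist x t ≤ infDist x s := by
  have := hs.to_subtype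
  rw [infDist_eq_iInf (s := s)]
  refine le_ciInf fun ⟨y, hy⟩ => ?_
  obtain ⟨y', hy', hdist⟩ := h y hy
  exact (infDist_le_dist_of_mem hy').trans hdist

theorem EuclideanSpace.dist_le_dist_of_forall_dist_le {ι : Type*} [Fintype ι]
    {x y y' : EuclideanSpace ℝ ι} (h : ∀ i, dist (x i) (y' i) ≤ dist (x i) (y i)) :
    dist x y' ≤ dist x y := by
  rw [EuclideanSpace.dist_eq, EuclideanSpace.dist_eq]
  gcongr with i
  exact h i

theorem exists_mem_uIcc_floor_div_eq {K : Type*} [Field K] [LinearOrder K] [IsStrictOrderedRing K]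
    [FloorRing K] {w : K} (hw : 0 < w) {s t : K} {c : ℤ}
    (hc : c ∈ Set.uIcc ⌊s / w⌋ ⌊t / w⌋) : ∃ u ∈ Set.uIcc s t, ⌊u / w⌋ = c := by
  wlog hst : s ≤ t generalizing s t
  · rw [Set.uIcc_comm] at hc
    obtain ⟨u, hu, huc⟩ := this hc (le_of_not_ge hst)
    exact ⟨u, Set.uIcc_comm s t ▸ hu, huc⟩
  rw [Set.uIcc_of_le (Int.floor_le_floor (by gcongr))] at hc
  have hcw : (c : K) * w ≤ t :=
    (le_div_iff₀ hw).1 ((Int.cast_le.2 hc.2).trans (Int.floor_le (t / w)))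
  have hsw : s < (c + 1) * w := by
    have hs := (div_lt_iff₀ hw).1 (Int.lt_floor_add_one (s / w))
    have hsc : (⌊s / w⌋ : K) ≤ c := Int.cast_le.2 hc.1
    nlinarith
  refine ⟨max s (c * w), Set.mem_uIcc_of_le (le_max_left _ _) (max_le hst hcw), ?_⟩
  rw [Int.floor_eq_iff, le_div_iff₀ hw, div_lt_iff₀ hw]
  exact ⟨le_max_right _ _, max_lt hsw (by nlinarith)⟩

namespace gridHash

variable {d : ℕ} {r : ℝ} {v : Fin d → ℝ}

theorem surjective (hw : 0 < r / Real.sqrt d) : Function.Surjective (gridHash d r v) := by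
  intro z
  refine ⟨WithLp.toLp 2 fun i => z i * (r / Real.sqrt d) - v i, funext fun i => ?_⟩
  simp [gridHash, mul_div_cancel_right₀ _ hw.ne']

theorem infDist_preimage_update_le (hw : 0 < r / Real.sqrt d) (x : EuclideanSpace ℝ (Fin d))
    (z : Fin d → ℤ) (i : Fin d) {c : ℤ} (hc : c ∈ Set.uIcc (z i) (gridHash d r v x i)) :
    Metric.infDist x (gridHash d r v ⁻¹' {Function.update z i c}) ≤
      Metric.infDist x (gridHash d r v ⁻¹' {z}) := by
  refine Metric.infDist_le_infDist_of_forall_exists_dist_le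
    (Set.preimage_singleton_nonempty.2 (surjective hw z)) fun y hy => ?_
  rw [Set.mem_preimage, Set.mem_singleton_iff] at hy
  obtain ⟨u, hu, huc⟩ := exists_mem_uIcc_floor_div_eq hw (s := y i + v i) (t := x i + v i)
    (hy ▸ hc)
  refine ⟨WithLp.toLp 2 (Function.update y.ofLp i (u - v i)), ?_, ?_⟩
  · ext j
    rcases eq_or_ne j i with rfl | hj
    · simpa [gridHash] using huc
    · simp [gridHash, hj, ← hy]
  · refine EuclideanSpace.dist_le_dist_of_forall_dist_le fun j => ?_
    rcases eq_or_ne j i with rfl | hj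
    · simp only [Function.update_self, Real.dist_eq]
      rw [sub_sub_eq_add_sub, ← add_sub_add_right_eq_sub (x j) (y j) (v j)]
      exact Set.abs_sub_right_of_mem_uIcc hu
    · simp [hj]

end gridHash

theorem gridGraph_adj_update {d : ℕ} {z : Fin d → ℤ} {i : Fin d} {c : ℤ} (h : |z i - c| = 1) :
    (gridGraph d).Adj z (Function.update z i c) := by
  show ∑ j, |z j - Function.update z i c j| = 1
  rw [Finset.sum_eq_single i (fun j _ hj => by simp [hj]) (by simp)]
  simpa using h

theorem gridGraph_exists_adj_update_lt {d : ℕ} {z z₀ : Fin d → ℤ} (hz : z ≠ z₀) :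
    ∃ i c, c ∈ Set.uIcc (z i) (z₀ i) ∧ (gridGraph d).Adj z (Function.update z i c) ∧
      ∑ j, (Function.update z i c j - z₀ j).natAbs < ∑ j, (z j - z₀ j).natAbs := by
  obtain ⟨i, hi⟩ := Function.ne_iff.1 hz
  obtain ⟨c, hc, hstep, hcloser⟩ : ∃ c, c ∈ Set.uIcc (z i) (z₀ i) ∧ |z i - c| = 1 ∧
      (c - z₀ i).natAbs < (z i - z₀ i).natAbs := by
    rcases hi.lt_or_gt with h | h
    · exact ⟨z i + 1, Set.mem_uIcc_of_le (by omega) (by omega), by simp, by omega⟩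
    · exact ⟨z i - 1, Set.mem_uIcc_of_ge (by omega) (by omega), by simp, by omega⟩
  refine ⟨i, c, hc, gridGraph_adj_update hstep, Finset.sum_lt_sum (fun j _ => ?_) ⟨i, by simpa⟩⟩
  rcases eq_or_ne j i with rfl | hj
  · simpa using hcloser.le
  · simp [hj]

theorem gridHash_ball_connected_general (d : ℕ) (hd : 1 ≤ d) (r : ℝ) (hr : 0 < r)
    (v : Fin d → ℝ)
    (x : EuclideanSpace ℝ (Fin d)) :
    ((gridGraph d).induce
      {z : Fin d → ℤ | Metric.infDist x (gridHash d r v ⁻¹' {z}) ≤ r}).Connected := by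
  have hw : 0 < r / Real.sqrt d := div_pos hr (Real.sqrt_pos.2 (Nat.cast_pos.2 hd))
  set z₀ := gridHash d r v x
  refine (gridGraph d).induce_connected_of_exists_adj_lt (a := z₀) ?_
    (fun z => ∑ j, (z j - z₀ j).natAbs) fun z hz hne => ?_
  · exact (Metric.infDist_zero_of_mem (s := gridHash d r v ⁻¹' {z₀}) rfl).trans_le hr.le
  · obtain ⟨i, c, hc, hadj, hlt⟩ := gridGraph_exists_adj_update_lt hne
    exact ⟨_, (gridHash.infDist_preimage_update_le hw x z i hc).trans hz, hadj, hlt⟩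

/-- **Connectivity of occupied hash buckets** (Lemma `lem:weakly-consistent`,
Item 4, of the paper). For the randomly shifted grid hash `φ = gridHash d r v`
with shift `v ∈ [0, r/√d]^d`, and any grid point `x ∈ [Δ]^d` and radius `r > 0`,
the set of hash values `{z ∈ ℤ^d : dist(x, φ⁻¹(z)) ≤ r}` induces a connected
subgraph of the grid graph on `ℤ^d`. -/
theorem gridHash_ball_connected (d Δ : ℕ) (hd : 1 ≤ d) (r : ℝ) (hr : 0 < r)
    (v : Fin d → ℝ) (hv : ∀ i, v i ∈ Set.Icc (0 : ℝ) (r / Real.sqrt d))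
    (x : EuclideanSpace ℝ (Fin d))
    (hx : ∀ i, ∃ m : ℤ, 1 ≤ m ∧ m ≤ (Δ : ℤ) ∧ x i = (m : ℝ)) :
    ((gridGraph d).induce
      {z : Fin d → ℤ | Metric.infDist x (gridHash d r v ⁻¹' {z}) ≤ r}).Connected :=
  gridHash_ball_connected_general d hd r hr v x
end

section
/- Let X be a finite weighted point set in R^d, S a finite set of centers, and σ : X → S an assignment such that dist(x, σ(x)) ≤ γ·dist(x, S) for all x ∈ X, where γ ≥ 1. Define center weights w_S(s) := ∑_{x : σ(x)=s} w(x). Then for any finite subset R ⊆ S, cost(X, S \ R) ≤ 2γ²·cost(X, S) + 2·∑_{s∈S} w_S(s)·dist(s, S \ R)². -/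
open Finset

/-- **Cost bound via an approximate assignment.** Let `σ : X → S` assign each
point to a `γ`-approximate nearest center, and let
`w_S(s) = ∑_{x : σ(x) = s} w(x)` be the resulting center weights. Then for any
subset `R ⊆ S`,
`cost(X, S \ R) ≤ 2γ²·cost(X, S) + 2·∑_{s ∈ S} w_S(s)·dist(s, S \ R)²`. -/
theorem cost_remove_centers_bound {d : ℕ}
    [DecidableEq (EuclideanSpace ℝ (Fin d))]
    (w : EuclideanSpace ℝ (Fin d) → ℝ) (hw : ∀ p, 0 ≤ w p)
    (X S R : Finset (EuclideanSpace ℝ (Fin d))) (hR : R ⊆ S)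
    (γ : ℝ) (hγ : 1 ≤ γ)
    (σ : EuclideanSpace ℝ (Fin d) → EuclideanSpace ℝ (Fin d))
    (hσS : ∀ x ∈ X, σ x ∈ S)
    (hσ : ∀ x ∈ X, dist x (σ x) ≤
      γ * Metric.infDist x (S : Set (EuclideanSpace ℝ (Fin d)))) :
    (∑ x ∈ X, w x *
        Metric.infDist x ((S \ R : Finset (EuclideanSpace ℝ (Fin d))) :
          Set (EuclideanSpace ℝ (Fin d))) ^ 2) ≤
      2 * γ ^ 2 *
          (∑ x ∈ X, w x *
            Metric.infDist x ((S : Set (EuclideanSpace ℝ (Fin d)))) ^ 2) +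
        2 * ∑ s ∈ S,
          (∑ x ∈ X.filter (fun x => σ x = s), w x) *
            Metric.infDist s ((S \ R : Finset (EuclideanSpace ℝ (Fin d))) :
              Set (EuclideanSpace ℝ (Fin d))) ^ 2 := by

  set T : Set (EuclideanSpace ℝ (Fin d)) := ((S \ R : Finset (EuclideanSpace ℝ (Fin d))) : Set (EuclideanSpace ℝ (Fin d))) with hT
  -- regroup the second sum
  have hregroup : ∑ s ∈ S, (∑ x ∈ X.filter (fun x => σ x = s), w x) * Metric.infDist s T ^ 2
      = ∑ x ∈ X, w x * Metric.infDist (σ x) T ^ 2 := by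
    rw [← Finset.sum_fiberwise_of_maps_to hσS (fun x => w x * Metric.infDist (σ x) T ^ 2)]
    refine Finset.sum_congr rfl fun s _ => ?_
    rw [Finset.sum_mul]
    refine Finset.sum_congr rfl fun x hx => ?_
    rw [(Finset.mem_filter.mp hx).2]
  rw [hregroup, Finset.mul_sum, Finset.mul_sum, ← Finset.sum_add_distrib]
  refine Finset.sum_le_sum fun x hx => ?_
  have hd0 : (0:ℝ) ≤ Metric.infDist x (S : Set (EuclideanSpace ℝ (Fin d))) :=
    Metric.infDist_nonneg
  have htri : Metric.infDist x T ≤ dist x (σ x) + Metric.infDist (σ x) T := by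
    calc Metric.infDist x T ≤ Metric.infDist (σ x) T + dist x (σ x) :=
          Metric.infDist_le_infDist_add_dist
      _ = dist x (σ x) + Metric.infDist (σ x) T := by ring
  have hsq : Metric.infDist x T ^ 2 ≤
      2 * (γ * Metric.infDist x (S : Set (EuclideanSpace ℝ (Fin d)))) ^ 2
        + 2 * Metric.infDist (σ x) T ^ 2 := by
    have h1 : Metric.infDist x T ^ 2 ≤ (dist x (σ x) + Metric.infDist (σ x) T) ^ 2 := by
      apply pow_le_pow_left₀ Metric.infDist_nonneg htri
    have h2 : (dist x (σ x) + Metric.infDist (σ x) T) ^ 2 ≤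
        2 * dist x (σ x) ^ 2 + 2 * Metric.infDist (σ x) T ^ 2 := by nlinarith [sq_nonneg (dist x (σ x) - Metric.infDist (σ x) T)]
    have h3 : dist x (σ x) ^ 2 ≤ (γ * Metric.infDist x (S : Set (EuclideanSpace ℝ (Fin d)))) ^ 2 := by
      apply pow_le_pow_left₀ dist_nonneg (hσ x hx)
    linarith
  have hwx := hw x
  calc w x * Metric.infDist x T ^ 2
      ≤ w x * (2 * (γ * Metric.infDist x (S : Set (EuclideanSpace ℝ (Fin d)))) ^ 2
          + 2 * Metric.infDist (σ x) T ^ 2) := by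
        exact mul_le_mul_of_nonneg_left hsq hwx
    _ = 2 * γ ^ 2 * (w x * Metric.infDist x (S : Set (EuclideanSpace ℝ (Fin d))) ^ 2)
          + 2 * (w x * Metric.infDist (σ x) T ^ 2) := by ring
end

section
/- Let S be a finite set of centers in R^d and T₁ ⊆ S with |T₁| ≥ 4r and T₁ disjoint from a given subset R* ⊆ S of size r. Let g : T₁ → S be the exact nearest-neighbor map (dist(s, g(s)) = dist(s, S \ {s}) for each s ∈ T₁). If |g(T₁)| < 3r, then there exists a subset T₁' ⊆ T₁ with |T₁'| ≥ r such that for every s ∈ T₁' there exists s' ∈ S \ (R* ∪ T₁') with dist(s, s') ≤ 2·dist(s, S \ {s}). -/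
open Finset

/-- **Existence of a good replacement set (Case 2 of
Claim `restricted-specific-replacement`).** Let `S` be a finite set of centers,
`R* ⊆ S` of size `r`, and `T₁ ⊆ S` disjoint from `R*` with `|T₁| ≥ 4r`. Let
`g` be the exact nearest-neighbor map on `T₁` (so `g s ∈ S \ {s}` and
`dist(s, g s) = dist(s, S \ {s})`). If `|g(T₁)| < 3r`, then there exists
`T₁' ⊆ T₁` with `|T₁'| ≥ r` such that every `s ∈ T₁'` has a witness
`s' ∈ S \ (R* ∪ T₁')` with `dist(s, s') ≤ 2·dist(s, S \ {s})`. -/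
theorem replacement_set_exists {d : ℕ}
    [DecidableEq (EuclideanSpace ℝ (Fin d))]
    (S Rstar T₁ : Finset (EuclideanSpace ℝ (Fin d))) (r : ℕ)
    (hRS : Rstar ⊆ S) (hRcard : Rstar.card = r)
    (hT₁S : T₁ ⊆ S) (hT₁card : 4 * r ≤ T₁.card) (hdisj : Disjoint T₁ Rstar)
    (g : EuclideanSpace ℝ (Fin d) → EuclideanSpace ℝ (Fin d))
    (hg : ∀ s ∈ T₁, g s ∈ S.erase s ∧
      dist s (g s) =
        Metric.infDist s ((S.erase s : Finset (EuclideanSpace ℝ (Fin d))) :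
          Set (EuclideanSpace ℝ (Fin d))))
    (himg : (T₁.image g).card < 3 * r) :
    ∃ T₁' ⊆ T₁, r ≤ T₁'.card ∧
      ∀ s ∈ T₁', ∃ s' ∈ S \ (Rstar ∪ T₁'),
        dist s s' ≤ 2 *
          Metric.infDist s ((S.erase s : Finset (EuclideanSpace ℝ (Fin d))) :
            Set (EuclideanSpace ℝ (Fin d))) := by
  classical
  have hmin : ∀ v ∈ T₁.image g, ∃ m ∈ T₁.filter (fun s => g s = v),
      ∀ b ∈ T₁.filter (fun s => g s = v), dist m v ≤ dist b v := by
    intro v hv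
    obtain ⟨s, hs, hgs⟩ := Finset.mem_image.mp hv
    exact Finset.exists_min_image _ (fun s => dist s v)
      ⟨s, Finset.mem_filter.mpr ⟨hs, hgs⟩⟩
  choose! rep hrep1 hrep2 using hmin
  set X : Finset (EuclideanSpace ℝ (Fin d)) := (T₁.image g).image rep with hX
  refine ⟨T₁ \ X, Finset.sdiff_subset, ?_, ?_⟩
  · have h1 : X.card ≤ (T₁.image g).card := Finset.card_image_le
    have h2 : T₁.card - X.card ≤ (T₁ \ X).card := Finset.le_card_sdiff X T₁
    omega
  · intro s hs
    have hsT : s ∈ T₁ := (Finset.mem_sdiff.mp hs).1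
    have hv : g s ∈ T₁.image g := Finset.mem_image_of_mem g hsT
    set v := g s
    have hrm : rep v ∈ T₁.filter (fun t => g t = v) := hrep1 v hv
    have hrT : rep v ∈ T₁ := (Finset.mem_filter.mp hrm).1
    have hrX : rep v ∈ X := Finset.mem_image_of_mem rep hv
    refine ⟨rep v, ?_, ?_⟩
    · refine Finset.mem_sdiff.mpr ⟨hT₁S hrT, ?_⟩
      intro hmem
      rcases Finset.mem_union.mp hmem with h | h
      · exact Finset.disjoint_left.mp hdisj hrT h
      · exact (Finset.mem_sdiff.mp h).2 hrX
    · have hdd : dist (rep v) v ≤ dist s v :=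
        hrep2 v hv s (Finset.mem_filter.mpr ⟨hsT, rfl⟩)
      have h2 := (hg s hsT).2
      calc dist s (rep v) ≤ dist s v + dist v (rep v) := dist_triangle _ _ _
        _ ≤ dist s v + dist s v := by rw [dist_comm v]; linarith
        _ = 2 * dist s (g s) := by ring
        _ = 2 * _ := by rw [h2]
end

section
/- Let X_j be a finite weighted cluster in R^d with center c_j and total weight w(X_j) > 0, and define the core Ĥ_j := {y ∈ X_j : dist(y, c_j)² ≤ (2/w(X_j))·cost(X_j, c_j)}. Then w(Ĥ_j) ≥ w(X_j)/2, and for every x ∈ Ĥ_j, cost(X_j, x) ≤ 6·cost(X_j, c_j). -/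
open Finset

/-- **Heavy core of a cluster.** Let `X_j` be a finite weighted cluster with
center `c_j` and positive total weight, and let
`Ĥ_j = {y ∈ X_j : dist(y, c_j)² ≤ (2/w(X_j))·cost(X_j, c_j)}` be its core.
Then `w(Ĥ_j) ≥ w(X_j)/2`, and every `x ∈ Ĥ_j` satisfies
`cost(X_j, x) ≤ 6·cost(X_j, c_j)`. -/
theorem cluster_core {d : ℕ}
    (w : EuclideanSpace ℝ (Fin d) → ℝ) (hw : ∀ p, 0 ≤ w p)
    (Xj Hj : Finset (EuclideanSpace ℝ (Fin d)))
    (cj : EuclideanSpace ℝ (Fin d))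
    (hW : 0 < ∑ y ∈ Xj, w y)
    (hHsub : Hj ⊆ Xj)
    (hHdef : ∀ y ∈ Xj, (y ∈ Hj ↔
      dist y cj ^ 2 ≤ (2 / ∑ z ∈ Xj, w z) * ptCost w Xj cj)) :
    (∑ y ∈ Xj, w y) / 2 ≤ (∑ y ∈ Hj, w y) ∧
      ∀ x ∈ Hj, ptCost w Xj x ≤ 6 * ptCost w Xj cj := by
  classical
  have hC0 : 0 ≤ ptCost w Xj cj :=
    Finset.sum_nonneg (fun y _ => mul_nonneg (hw y) (sq_nonneg _))
  set W := ∑ y ∈ Xj, w y with hWdef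
  set C := ptCost w Xj cj with hCdef
  have hterm : ∀ y ∈ Xj, 0 ≤ w y * dist y cj ^ 2 :=
    fun y _ => mul_nonneg (hw y) (sq_nonneg _)
  have hsplit : ∑ y ∈ Hj, w y + ∑ y ∈ Xj \ Hj, w y = W := by
    rw [hWdef, ← Finset.sum_sdiff hHsub]; ring
  constructor
  · rcases eq_or_lt_of_le hC0 with hC | hC
    · -- C = 0 : every point of Xj\Hj has weight 0
      have hz : ∀ y ∈ Xj, w y * dist y cj ^ 2 = 0 := by
        intro y hy
        have := (Finset.sum_eq_zero_iff_of_nonneg hterm).mp hC.symm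
        exact this y hy
      have hB : ∑ y ∈ Xj \ Hj, w y = 0 := by
        apply Finset.sum_eq_zero
        intro y hy
        obtain ⟨hyX, hyH⟩ := Finset.mem_sdiff.mp hy
        have hnot := (hHdef y hyX).not.mp hyH
        push_neg at hnot
        rw [← hC] at hnot
        have hd : 0 < dist y cj ^ 2 := lt_of_le_of_lt (by positivity) hnot
        have := hz y hyX
        nlinarith
      linarith [hsplit, hW]
    · -- C > 0 : Markov argument
      have hB : ∀ y ∈ Xj \ Hj, (2 / W) * C * w y ≤ w y * dist y cj ^ 2 := by
        intro y hy
        obtain ⟨hyX, hyH⟩ := Finset.mem_sdiff.mp hy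
        have hnot := (hHdef y hyX).not.mp hyH
        push_neg at hnot
        nlinarith [hw y]
      have hsum : (2 / W) * C * ∑ y ∈ Xj \ Hj, w y ≤ C := by
        rw [Finset.mul_sum]
        calc ∑ y ∈ Xj \ Hj, (2 / W) * C * w y ≤ ∑ y ∈ Xj \ Hj, w y * dist y cj ^ 2 :=
              Finset.sum_le_sum hB
          _ ≤ C := Finset.sum_le_sum_of_subset_of_nonneg Finset.sdiff_subset
              (fun y hy _ => hterm y hy)
      have hWne : W ≠ 0 := ne_of_gt hW
      have h2 : (2 / W) * W = 2 := by field_simp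
      have hBle : ∑ y ∈ Xj \ Hj, w y ≤ W / 2 := by
        by_contra hcon
        push_neg at hcon
        have : (2 / W) * C * (W / 2) < (2 / W) * C * ∑ y ∈ Xj \ Hj, w y := by
          apply mul_lt_mul_of_pos_left hcon
          positivity
        have heq : (2 / W) * C * (W / 2) = C := by field_simp
        linarith
      linarith
  · intro x hx
    have hx2 := (hHdef x (hHsub hx)).mp hx
    have key : ∀ y ∈ Xj, w y * dist y x ^ 2 ≤
        w y * (2 * dist y cj ^ 2 + 2 * dist x cj ^ 2) := by
      intro y hy
      apply mul_le_mul_of_nonneg_left _ (hw y)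
      have htri : dist y x ≤ dist y cj + dist x cj := by
        calc dist y x ≤ dist y cj + dist cj x := dist_triangle _ _ _
          _ = dist y cj + dist x cj := by rw [dist_comm cj x]
      have hsq : dist y x ^ 2 ≤ (dist y cj + dist x cj) ^ 2 := by
        rw [sq, sq]
        exact mul_le_mul htri htri dist_nonneg (by positivity)
      nlinarith [sq_nonneg (dist y cj - dist x cj)]
    have hsum2 : ptCost w Xj x ≤ 2 * C + W * (2 * dist x cj ^ 2) := by
      calc ptCost w Xj x ≤ ∑ y ∈ Xj, w y * (2 * dist y cj ^ 2 + 2 * dist x cj ^ 2) :=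
            Finset.sum_le_sum key
        _ = 2 * C + W * (2 * dist x cj ^ 2) := by
            rw [hCdef, hWdef, ptCost]
            rw [Finset.sum_mul, Finset.mul_sum]
            rw [← Finset.sum_add_distrib]
            apply Finset.sum_congr rfl
            intro y _
            ring
    have hWne : W ≠ 0 := ne_of_gt hW
    have hmul : W * ((2 / W) * C) = 2 * C := by field_simp
    have : W * (2 * dist x cj ^ 2) ≤ W * (2 * ((2 / W) * C)) := by
      apply mul_le_mul_of_nonneg_left _ (le_of_lt hW)
      linarith
    nlinarith
end

section
/- Let α, β ∈ R≥0 and suppose a weighted cluster X_j with center c_j satisfies cost(X_j, S∪A) ≤ 2β² + 2α² and cost(X_j, S∪A) ≥ 8β², where α := √(w(X_j))·dist(c_j, S∪A) and β := √(cost(X_j, c_j)). Then α ≥ √3·β, and consequently (α − √2·β)² / (4β² + 4α²) ≥ (5 − 2√6)/16. -/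
/-- **Algebraic core of the D²-sampling analysis for bad clusters.** Let
`α = √(w(X_j))·dist(c_j, S∪A) ≥ 0` and `β = √(cost(X_j, c_j)) ≥ 0`, and suppose
the (positive) cost `cost(X_j, S∪A)` satisfies
`cost(X_j, S∪A) ≤ 2β² + 2α²` and `cost(X_j, S∪A) ≥ 8β²`. Then `α ≥ √3·β`, and
consequently `(α − √2·β)²/(4β² + 4α²) ≥ (5 − 2√6)/16`. -/
theorem bad_cluster_ratio (α β cst : ℝ) (hα : 0 ≤ α) (hβ : 0 ≤ β)
    (hcst : 0 < cst)
    (h1 : cst ≤ 2 * β ^ 2 + 2 * α ^ 2) (h2 : 8 * β ^ 2 ≤ cst) :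
    Real.sqrt 3 * β ≤ α ∧
      (5 - 2 * Real.sqrt 6) / 16 ≤
        (α - Real.sqrt 2 * β) ^ 2 / (4 * β ^ 2 + 4 * α ^ 2) := by
  have s2 : Real.sqrt 2 ^ 2 = 2 := Real.sq_sqrt (by norm_num)
  have s3 : Real.sqrt 3 ^ 2 = 3 := Real.sq_sqrt (by norm_num)
  have s2n : (0:ℝ) ≤ Real.sqrt 2 := Real.sqrt_nonneg 2
  have s3n : (0:ℝ) ≤ Real.sqrt 3 := Real.sqrt_nonneg 3
  have s6 : Real.sqrt 6 = Real.sqrt 2 * Real.sqrt 3 := by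
    rw [← Real.sqrt_mul (by norm_num : (0:ℝ) ≤ 2)]; norm_num
  have hab : 3 * β ^ 2 ≤ α ^ 2 := by nlinarith
  have h3b : Real.sqrt 3 * β ≤ α := by
    nlinarith [sq_nonneg (Real.sqrt 3 * β - α), sq_nonneg (Real.sqrt 3 * β + α),
      mul_nonneg s3n hβ]
  refine ⟨h3b, ?_⟩
  have hD : 0 < 4 * β ^ 2 + 4 * α ^ 2 := by nlinarith
  rw [div_le_div_iff₀ (by norm_num) hD]
  have key : 0 ≤ (α - Real.sqrt 3 * β) * ((8 * Real.sqrt 6 - 4) * α + (8 * Real.sqrt 6 - 4) * Real.sqrt 3 * β - 32 * Real.sqrt 2 * β) := by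
    apply mul_nonneg (by linarith)
    have h1 : 16 * Real.sqrt 2 ≤ (8 * Real.sqrt 6 - 4) * Real.sqrt 3 := by
      rw [s6]
      nlinarith [sq_nonneg (Real.sqrt 2 - Real.sqrt 3), sq_nonneg (2*Real.sqrt 2 - Real.sqrt 3)]
    have h2 : Real.sqrt 3 * β ≤ α := h3b
    have h6n : (1:ℝ) ≤ Real.sqrt 6 := by
      rw [s6]; nlinarith
    nlinarith [mul_nonneg s3n hβ]
  have expand : (α - Real.sqrt 2 * β) ^ 2 * 16 - (5 - 2 * Real.sqrt 6) * (4 * β ^ 2 + 4 * α ^ 2) =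
      (α - Real.sqrt 3 * β) * ((8 * Real.sqrt 6 - 4) * α + (8 * Real.sqrt 6 - 4) * Real.sqrt 3 * β - 32 * Real.sqrt 2 * β) := by
    linear_combination 16 * β ^ 2 * s2 + (8 * Real.sqrt 6 - 4) * β ^ 2 * s3 + 32 * β ^ 2 * s6
  linarith [key, expand]
end
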